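/- Let s², δ, P̄, Q, 𝕹 be strictly positive reals, let X be a real random variable with the exponential distribution of mean s² (density (1/s²)e^{−x/s²} on [0,∞)), and set ρ = 𝕹/(δ²·P̄·s²). Then for every α ∈ [0,1), E[ ln( δ⁴X²·P̄·Q·(1−α)² + 𝕹·δ²·X·(P̄ + α²Q) ) ] = E[ln X] + ln(𝕹 δ² Q) + ln(P̄/Q + α²) + e^{κ(α)} · E₁(κ(α)), where κ(α) = ρ·(P̄/Q + α²)/(1−α)² and E₁(z) = ∫_z^∞ t^{−1} e^{−t} dt. In particular, minimizing the left-hand side over α ∈ [0,1) is equivalent to minimizing ln(P̄/Q + α²) + e^{κ(α)} E₁(κ(α)). -/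

import Mathlib

/-!
For `x > 0` the argument of the logarithm factors as `p x (x + q/p)` with
`p = δ⁴P̄Q(1−α)²` and `q = 𝕹δ²(P̄ + α²Q)`, so the expectation splits as
`E ln X + ln p + E ln(X + c)` with `c = q/p`. For `X` exponential of rate `r = 1/s²`,
integrating by parts against `−e^{−rx}` gives
`E ln(X + c) = ln c + ∫₀^∞ e^{−rx}/(x + c) dx = ln c + e^{rc} E₁(rc)`, and `rc = κ(α)`.
The comparison of `L α` with `L β` follows since the remaining terms do not depend on `α`.
-/

open MeasureTheory ProbabilityTheory
open Real Set Filter Topology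

noncomputable def expIntegralE₁ (z : ℝ) : ℝ := ∫ t in Ioi z, t⁻¹ * exp (-t)

lemma abs_log_le_two_mul_rpow_neg_half_add {x : ℝ} (hx : 0 < x) :
    |log x| ≤ 2 * x ^ (-(1 / 2) : ℝ) + x := by
  have hpos : 0 < x ^ (-(1 / 2) : ℝ) := rpow_pos_of_pos hx _
  have hle : log x ≤ x := (log_le_sub_one_of_pos hx).trans (by linarith)
  have hge : -log x ≤ 2 * x ^ (-(1 / 2) : ℝ) := by
    have := log_le_rpow_div (inv_nonneg.2 hx.le) (one_half_pos : (0 : ℝ) < 1 / 2)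
    rwa [log_inv, inv_rpow hx.le, ← rpow_neg hx.le, div_eq_mul_inv, mul_comm,
      show ((1 : ℝ) / 2)⁻¹ = 2 by norm_num] at this
  rw [abs_le]
  constructor <;> linarith

lemma setIntegral_Ioi_comp_add (g : ℝ → ℝ) (a c : ℝ) :
    ∫ x in Ioi a, g (x + c) = ∫ y in Ioi (a + c), g y := by
  rw [← integral_indicator measurableSet_Ioi, ← integral_indicator measurableSet_Ioi,
    ← integral_add_right_eq_self ((Ioi (a + c)).indicator g) c]
  congr 1 with x
  simp only [indicator_apply, mem_Ioi, add_lt_add_iff_right]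

section

variable {r : ℝ}

lemma tendsto_exp_neg_mul_mul_log_add_atTop (hr : 0 < r) (c : ℝ) :
    Tendsto (fun x ↦ exp (-(r * x)) * log (x + c)) atTop (𝓝 0) := by
  have hexp : Tendsto (fun x ↦ exp (-(r * x))) atTop (𝓝 0) := by
    simpa only [rpow_zero, one_mul, neg_mul] using
      tendsto_rpow_mul_exp_neg_mul_atTop_nhds_zero 0 r hr
  have hmul : Tendsto (fun x ↦ x * exp (-(r * x))) atTop (𝓝 0) := by
    simpa only [rpow_one, neg_mul] using tendsto_rpow_mul_exp_neg_mul_atTop_nhds_zero 1 r hr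
  have hbound : Tendsto (fun x ↦ x * exp (-(r * x)) + c * exp (-(r * x))) atTop (𝓝 0) := by
    simpa using hmul.add (hexp.const_mul c)
  refine squeeze_zero' ?_ ?_ hbound <;> filter_upwards [eventually_ge_atTop (1 - c)] with x hx
  · exact mul_nonneg (exp_pos _).le (log_nonneg (by linarith))
  · calc exp (-(r * x)) * log (x + c) ≤ exp (-(r * x)) * (x + c) :=
          mul_le_mul_of_nonneg_left (log_le_self (by linarith)) (exp_pos _).le
      _ = x * exp (-(r * x)) + c * exp (-(r * x)) := by ring

lemma integrableOn_exp_neg_mul_mul_inv_add (hr : 0 < r) {c : ℝ} (hc : 0 < c) :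
    IntegrableOn (fun x ↦ exp (-(r * x)) * (x + c)⁻¹) (Ioi 0) := by
  refine Integrable.mono' ((exp_neg_integrableOn_Ioi 0 hr).mul_const c⁻¹)
    (by fun_prop) ((ae_restrict_iff' measurableSet_Ioi).2 (ae_of_all _ fun x (hx : 0 < x) ↦ ?_))
  rw [norm_mul, norm_of_nonneg (exp_pos _).le, norm_of_nonneg (by positivity), neg_mul]
  gcongr
  linarith

lemma setIntegral_exp_neg_mul_mul_inv_add (hr : 0 < r) (c : ℝ) :
    ∫ x in Ioi 0, exp (-(r * x)) * (x + c)⁻¹ = exp (r * c) * expIntegralE₁ (r * c) := by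
  calc ∫ x in Ioi 0, exp (-(r * x)) * (x + c)⁻¹
      = ∫ x in Ioi 0, exp (r * c) * (r * ((r * (x + c))⁻¹ * exp (-(r * (x + c))))) := by
        refine setIntegral_congr_fun measurableSet_Ioi fun x _ ↦ ?_
        have hexp : exp (-(r * x)) = exp (r * c) * exp (-(r * (x + c))) := by
          rw [← exp_add]
          ring_nf
        rw [hexp]
        field_simp
    _ = exp (r * c) * (r * ∫ y in Ioi c, (r * y)⁻¹ * exp (-(r * y))) := by
        rw [integral_const_mul, integral_const_mul,
          setIntegral_Ioi_comp_add (fun y ↦ (r * y)⁻¹ * exp (-(r * y))), zero_add]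
    _ = exp (r * c) * expIntegralE₁ (r * c) := by
        rw [integral_comp_mul_left_Ioi (fun t ↦ t⁻¹ * exp (-t)) c hr, smul_eq_mul,
          mul_inv_cancel_left₀ hr.ne', expIntegralE₁]

lemma expMeasure_eq_withDensity (r : ℝ) :
    expMeasure r = volume.withDensity (exponentialPDF r) := rfl

lemma measurable_exponentialPDF (r : ℝ) : Measurable (exponentialPDF r) :=
  (measurable_exponentialPDFReal r).ennreal_ofReal

lemma toReal_exponentialPDF_smul (hr : 0 < r) (g : ℝ → ℝ) (x : ℝ) :
    (exponentialPDF r x).toReal • g x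
      = (Ici 0).indicator (fun x ↦ r * exp (-(r * x)) * g x) x := by
  by_cases hx : 0 ≤ x
  · rw [exponentialPDF_of_nonneg hx, indicator_of_mem (mem_Ici.2 hx),
      ENNReal.toReal_ofReal (by positivity), smul_eq_mul]
  · rw [exponentialPDF_of_neg (not_le.1 hx), indicator_of_notMem (by simpa using hx)]
    simp

lemma integral_expMeasure (hr : 0 < r) (g : ℝ → ℝ) :
    ∫ x, g x ∂expMeasure r = ∫ x in Ioi 0, r * exp (-(r * x)) * g x := by
  rw [expMeasure_eq_withDensity, integral_withDensity_eq_integral_toReal_smul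
    (measurable_exponentialPDF r) (ae_of_all _ fun _ ↦ ENNReal.ofReal_lt_top),
    ← integral_Ici_eq_integral_Ioi, ← integral_indicator measurableSet_Ici]
  simp_rw [toReal_exponentialPDF_smul hr]

lemma integrable_expMeasure_iff (hr : 0 < r) {g : ℝ → ℝ} :
    Integrable g (expMeasure r) ↔ IntegrableOn (fun x ↦ r * exp (-(r * x)) * g x) (Ioi 0) := by
  rw [expMeasure_eq_withDensity, integrable_withDensity_iff_integrable_smul'
    (measurable_exponentialPDF r) (ae_of_all _ fun _ ↦ ENNReal.ofReal_lt_top),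
    ← integrableOn_Ici_iff_integrableOn_Ioi, ← integrable_indicator_iff measurableSet_Ici]
  simp_rw [toReal_exponentialPDF_smul hr]

lemma ae_pos_expMeasure (r : ℝ) : ∀ᵐ x ∂expMeasure r, 0 < x := by
  rw [expMeasure_eq_withDensity, ae_withDensity_iff (measurable_exponentialPDF r)]
  filter_upwards [compl_mem_ae_iff.2 (measure_singleton (0 : ℝ))] with x hx0 hx
  contrapose! hx
  exact exponentialPDF_of_neg (lt_of_le_of_ne hx hx0)

lemma integrable_rpow_expMeasure (hr : 0 < r) {s : ℝ} (hs : -1 < s) :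
    Integrable (fun x ↦ x ^ s) (expMeasure r) := by
  rw [integrable_expMeasure_iff hr]
  refine IntegrableOn.congr_fun
    ((integrableOn_rpow_mul_exp_neg_mul_rpow hs one_pos hr).const_mul r) (fun x _ ↦ ?_)
    measurableSet_Ioi
  simp only [rpow_one, neg_mul]
  ring

lemma integrable_log_expMeasure (hr : 0 < r) : Integrable log (expMeasure r) := by
  refine (((integrable_rpow_expMeasure hr (s := -(1 / 2)) (by norm_num)).const_mul 2).add
    (integrable_rpow_expMeasure hr (s := 1) (by norm_num))).mono'
    measurable_log.aestronglyMeasurable ?_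
  filter_upwards [ae_pos_expMeasure r] with x hx
  simpa only [rpow_one, norm_eq_abs, Pi.add_apply] using abs_log_le_two_mul_rpow_neg_half_add hx

lemma integrable_log_add_expMeasure (hr : 0 < r) {c : ℝ} (hc : 0 ≤ c) :
    Integrable (fun x ↦ log (x + c)) (expMeasure r) := by
  have : IsProbabilityMeasure (expMeasure r) := isProbabilityMeasure_expMeasure hr
  refine (((integrable_log_expMeasure hr).abs.add
    (integrable_rpow_expMeasure hr (s := 1) (by norm_num))).add (integrable_const c)).mono'
    (measurable_log.comp (measurable_add_const c)).aestronglyMeasurable ?_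
  filter_upwards [ae_pos_expMeasure r] with x hx
  have hlow : log x ≤ log (x + c) := log_le_log hx (by linarith)
  have hup : log (x + c) ≤ x + c := (log_le_sub_one_of_pos (by linarith)).trans (by linarith)
  simp only [norm_eq_abs, rpow_one, Pi.add_apply]
  rw [abs_le]
  constructor <;> linarith [neg_abs_le (log x), abs_nonneg (log x)]

lemma integral_log_add_expMeasure (hr : 0 < r) {c : ℝ} (hc : 0 < c) :
    ∫ x, log (x + c) ∂expMeasure r = log c + exp (r * c) * expIntegralE₁ (r * c) := by
  have hderiv : ∀ x ∈ Ici (0 : ℝ), HasDerivAt (fun x ↦ -exp (-(r * x)) * log (x + c))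
      (r * exp (-(r * x)) * log (x + c) - exp (-(r * x)) * (x + c)⁻¹) x := by
    intro x (hx : 0 ≤ x)
    have hlog : HasDerivAt (fun x ↦ log (x + c)) (x + c)⁻¹ x := by
      simpa using ((hasDerivAt_id x).add_const c).log (by positivity)
    exact (hasDerivAt_neg_exp_mul_exp.mul hlog).congr_deriv (by ring)
  have hlogint := (integrable_expMeasure_iff hr).1 (integrable_log_add_expMeasure hr hc.le)
  have hlim : Tendsto (fun x ↦ -exp (-(r * x)) * log (x + c)) atTop (𝓝 0) := by
    simpa only [neg_mul, neg_zero] using (tendsto_exp_neg_mul_mul_log_add_atTop hr c).neg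
  have hparts := integral_Ioi_of_hasDerivAt_of_tendsto' hderiv
    (hlogint.sub (integrableOn_exp_neg_mul_mul_inv_add hr hc)) hlim
  rw [integral_sub hlogint (integrableOn_exp_neg_mul_mul_inv_add hr hc),
    setIntegral_exp_neg_mul_mul_inv_add hr c] at hparts
  rw [integral_expMeasure hr]
  simp only [mul_zero, neg_zero, exp_zero, zero_add, neg_mul, one_mul, sub_neg_eq_add] at hparts
  linarith

lemma integral_log_mul_sq_add_mul_expMeasure (hr : 0 < r) {p q : ℝ} (hp : 0 < p) (hq : 0 < q) :
    ∫ x, log (p * x ^ 2 + q * x) ∂expMeasure r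
      = ∫ x, log x ∂expMeasure r + log q + exp (r * (q / p)) * expIntegralE₁ (r * (q / p)) := by
  have : IsProbabilityMeasure (expMeasure r) := isProbabilityMeasure_expMeasure hr
  have hsplit : (fun x ↦ log (p * x ^ 2 + q * x)) =ᵐ[expMeasure r]
      fun x ↦ log x + log p + log (x + q / p) := by
    filter_upwards [ae_pos_expMeasure r] with x hx
    rw [show p * x ^ 2 + q * x = x * p * (x + q / p) by field_simp,
      log_mul (by positivity) (by positivity), log_mul hx.ne' hp.ne']
  have hlog := integrable_log_expMeasure hr
  have hlog_add_const : Integrable (fun x ↦ log x + log p) (expMeasure r) :=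
    hlog.add (integrable_const _)
  rw [integral_congr_ae hsplit,
    integral_add hlog_add_const (integrable_log_add_expMeasure hr (by positivity)),
    integral_add hlog (integrable_const _), integral_const,
    integral_log_add_expMeasure hr (by positivity), log_div hq.ne' hp.ne']
  simp only [probReal_univ, one_smul]
  ring

end

theorem average_log_dpc_denominator_general {Ω : Type*} [MeasurableSpace Ω] (μ : Measure Ω)
    (s2 δ Pbar Q 𝕹 : ℝ)
    (hs2 : 0 < s2) (hδ : 0 < δ) (hP : 0 < Pbar) (hQ : 0 < Q) (h𝕹 : 0 < 𝕹)
    (X : Ω → ℝ) (hX : Measurable X)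
    (hlaw : μ.map X = expMeasure (1 / s2))
    (ρ : ℝ) (hρ : ρ = 𝕹 / (δ ^ 2 * Pbar * s2))
    (κ : ℝ → ℝ) (hκ : ∀ α, κ α = ρ * (Pbar / Q + α ^ 2) / (1 - α) ^ 2)
    (E1 : ℝ → ℝ) (hE1 : ∀ z, E1 z = ∫ t in Set.Ioi z, t⁻¹ * Real.exp (-t))
    (L : ℝ → ℝ)
    (hL : ∀ α, L α = μ[fun ω => Real.log
      (δ ^ 4 * X ω ^ 2 * Pbar * Q * (1 - α) ^ 2 + 𝕹 * δ ^ 2 * X ω * (Pbar + α ^ 2 * Q))]) :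
    (∀ α ∈ Set.Ico (0 : ℝ) 1,
      L α = μ[fun ω => Real.log (X ω)] + Real.log (𝕹 * δ ^ 2 * Q)
              + Real.log (Pbar / Q + α ^ 2) + Real.exp (κ α) * E1 (κ α)) ∧
    ∀ α ∈ Set.Ico (0 : ℝ) 1, ∀ β ∈ Set.Ico (0 : ℝ) 1,
      (L α ≤ L β ↔
        Real.log (Pbar / Q + α ^ 2) + Real.exp (κ α) * E1 (κ α)
          ≤ Real.log (Pbar / Q + β ^ 2) + Real.exp (κ β) * E1 (κ β)) := by
  have hE : ∀ {f : ℝ → ℝ}, Measurable f → μ[fun ω ↦ f (X ω)] = ∫ x, f x ∂expMeasure (1 / s2) :=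
    fun hf ↦ by rw [← hlaw, integral_map hX.aemeasurable hf.aestronglyMeasurable]
  have hclosed : ∀ α ∈ Ico (0 : ℝ) 1, L α = μ[fun ω ↦ log (X ω)] + log (𝕹 * δ ^ 2 * Q)
      + log (Pbar / Q + α ^ 2) + exp (κ α) * E1 (κ α) := by
    rintro α ⟨-, hα1⟩
    have h1α : 0 < 1 - α := sub_pos.2 hα1
    set p := δ ^ 4 * Pbar * Q * (1 - α) ^ 2 with hp
    set q := 𝕹 * δ ^ 2 * (Pbar + α ^ 2 * Q) with hq
    have hLα : L α = ∫ x, log (p * x ^ 2 + q * x) ∂expMeasure (1 / s2) := by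
      rw [hL, ← hE (f := fun x ↦ log (p * x ^ 2 + q * x)) (measurable_log.comp (by fun_prop))]
      congr with ω
      rw [hp, hq]
      ring_nf
    have hκα : κ α = 1 / s2 * (q / p) := by
      rw [hκ, hρ, hp, hq]
      field_simp
    have hlog_q : log q = log (𝕹 * δ ^ 2 * Q) + log (Pbar / Q + α ^ 2) := by
      rw [← log_mul (by positivity) (by positivity), hq]
      field_simp
    rw [hLα, hE measurable_log, hE1, hκα, ← expIntegralE₁,
      integral_log_mul_sq_add_mul_expMeasure (by positivity) (by positivity) (by positivity),
      hlog_q]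
    ring
  refine ⟨hclosed, fun α hα β hβ ↦ ?_⟩
  rw [hclosed α hα, hclosed β hβ]
  simp only [add_assoc, add_le_add_iff_left]

/-- Closed form for the expected logarithm of the DPC denominator
`𝔓𝔔(1−α)² + 𝕹(𝔓+α²𝔔)` with `𝔓 = δ²XP̄`, `𝔔 = δ²XQ`, over an exponentially distributed
`X = |Ĥ|²`; consequently the minimization over `α ∈ [0,1)` reduces to minimizing
`ln(P̄/Q + α²) + e^{κ(α)} E₁(κ(α))`. -/
theorem average_log_dpc_denominator {Ω : Type*} [MeasurableSpace Ω] (μ : Measure Ω)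
    [IsProbabilityMeasure μ]
    (s2 δ Pbar Q 𝕹 : ℝ)
    (hs2 : 0 < s2) (hδ : 0 < δ) (hP : 0 < Pbar) (hQ : 0 < Q) (h𝕹 : 0 < 𝕹)
    (X : Ω → ℝ) (hX : Measurable X)
    (hlaw : μ.map X = expMeasure (1 / s2))
    (ρ : ℝ) (hρ : ρ = 𝕹 / (δ ^ 2 * Pbar * s2))
    (κ : ℝ → ℝ) (hκ : ∀ α, κ α = ρ * (Pbar / Q + α ^ 2) / (1 - α) ^ 2)
    (E1 : ℝ → ℝ) (hE1 : ∀ z, E1 z = ∫ t in Set.Ioi z, t⁻¹ * Real.exp (-t))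
    (L : ℝ → ℝ)
    (hL : ∀ α, L α = μ[fun ω => Real.log
      (δ ^ 4 * X ω ^ 2 * Pbar * Q * (1 - α) ^ 2 + 𝕹 * δ ^ 2 * X ω * (Pbar + α ^ 2 * Q))]) :
    (∀ α ∈ Set.Ico (0 : ℝ) 1,
      L α = μ[fun ω => Real.log (X ω)] + Real.log (𝕹 * δ ^ 2 * Q)
              + Real.log (Pbar / Q + α ^ 2) + Real.exp (κ α) * E1 (κ α)) ∧
    ∀ α ∈ Set.Ico (0 : ℝ) 1, ∀ β ∈ Set.Ico (0 : ℝ) 1,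
      (L α ≤ L β ↔
        Real.log (Pbar / Q + α ^ 2) + Real.exp (κ α) * E1 (κ α)
          ≤ Real.log (Pbar / Q + β ^ 2) + Real.exp (κ β) * E1 (κ β)) :=
  average_log_dpc_denominator_general μ s2 δ Pbar Q 𝕹 hs2 hδ hP hQ h𝕹 X hX hlaw ρ hρ κ hκ E1 hE1 L
    hL
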